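/- Let G⊙H be k'-metric dimensional where G is connected of order n ≥ 2 and all graphs in H are connected and non-trivial. Then for every k ∈ {1,...,k'}: Σ_{i=1}^n dim_k(H_i) ≤ dim_k(G⊙H) ≤ Σ_{i=1}^n |V(H_i)|. -/

import Mathlib

open SimpleGraph

/-- `S` is a `k`-metric generator for `G`: every pair of distinct vertices is
distinguished (has different distances) by at least `k` vertices of `S`. -/
def kMetricGen {V : Type*} [Fintype V] (G : SimpleGraph V) (k : ℕ) (S : Set V) : Prop :=
  ∀ u v : V, u ≠ v → ∃ T : Finset V, ↑T ⊆ S ∧ k ≤ T.card ∧ ∀ w ∈ T, G.dist u w ≠ G.dist v w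

/-- `G` is `k`-metric dimensional: `k` is the largest integer admitting a `k`-metric generator. -/
def kMetricDimensional {V : Type*} [Fintype V] (G : SimpleGraph V) (k : ℕ) : Prop :=
  (∃ S : Set V, kMetricGen G k S) ∧ ∀ k' : ℕ, (∃ S : Set V, kMetricGen G k' S) → k' ≤ k

/-- The `k`-metric dimension of `G`. -/
noncomputable def kMetricDim {V : Type*} [Fintype V] (G : SimpleGraph V) (k : ℕ) : ℕ :=
  sInf {m | ∃ S : Finset V, kMetricGen G k ↑S ∧ S.card = m}

/-- A `k`-metric basis: a minimum-cardinality `k`-metric generator. -/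
def kMetricBasis {V : Type*} [Fintype V] (G : SimpleGraph V) (k : ℕ) (B : Finset V) : Prop :=
  kMetricGen G k ↑B ∧ ∀ T : Finset V, kMetricGen G k ↑T → B.card ≤ T.card

/-- Auxiliary relation for the corona product. -/
def coronaRel {V : Type*} {W : V → Type*} (G : SimpleGraph V) (H : ∀ v, SimpleGraph (W v)) :
    (V ⊕ (Σ v, W v)) → (V ⊕ (Σ v, W v)) → Prop
  | Sum.inl a, Sum.inl b => G.Adj a b
  | Sum.inl a, Sum.inr b => a = b.1
  | Sum.inr a, Sum.inr b => ∃ h : a.1 = b.1, (H b.1).Adj (h ▸ a.2) b.2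
  | _, _ => False

/-- The corona product `G ⊙ 𝓗`: one copy of `G`, and each vertex `v` of `G` joined by an
edge to every vertex of its own copy of `H v`. -/
def corona {V : Type*} {W : V → Type*} (G : SimpleGraph V) (H : ∀ v, SimpleGraph (W v)) :
    SimpleGraph (V ⊕ (Σ v, W v)) :=
  SimpleGraph.fromRel (coronaRel G H)

/-- The join `K₁ + H`: a new vertex (`none`) adjacent to every vertex of `H`. -/
def K1join {U : Type*} (H : SimpleGraph U) : SimpleGraph (Option U) :=
  SimpleGraph.fromRel (fun x y => match x, y with
    | none, some _ => True
    | some a, some b => H.Adj a b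
    | _, _ => False)

/-- `𝒞(H) = min_{x ≠ y} |(N(x) △ N(y)) ∪ {x,y}|`. -/
noncomputable def CC {U : Type*} (H : SimpleGraph U) : ℕ :=
  sInf {m | ∃ x y : U, x ≠ y ∧
    (symmDiff (H.neighborSet x) (H.neighborSet y) ∪ {x, y}).ncard = m}

/-!
Distances in `G ⊙ H` are explicit: `d(a, (b, w)) = d_G(a, b) + 1`, `d((a, x), (b, w)) =
d_G(a, b) + 2` for `a ≠ b`, and `min (d_{H_a}(x, w)) 2` inside one copy. The lower bounds come
from the distance to a copy of `H_b`, which changes by at most one along an edge. Consequently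
only vertices of the copy of `H_a` distinguish two vertices of that copy, so a `k`-metric
generator of `G ⊙ H` restricts to one of every `H_a`, giving the lower bound. Conversely every
other pair of vertices is distinguished by all vertices of a suitable copy, and a copy has at least
`k' ≥ k` vertices; so all copies together form a `k`-metric generator, giving the upper bound.
-/

open Sum

theorem SimpleGraph.Walk.le_add_length_of_adj {V : Type*} {G : SimpleGraph V} (f : V → ℕ)
    (hf : ∀ x y, G.Adj x y → f x ≤ f y + 1) {u v : V} (p : G.Walk u v) :
    f u ≤ f v + p.length := by
  induction p with
  | nil => simp
  | cons h _ ih => have := hf _ _ h; rw [Walk.length_cons]; omega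

theorem SimpleGraph.Reachable.le_add_dist_of_adj {V : Type*} {G : SimpleGraph V} (f : V → ℕ)
    (hf : ∀ x y, G.Adj x y → f x ≤ f y + 1) {u v : V} (h : G.Reachable u v) :
    f u ≤ f v + G.dist u v := by
  obtain ⟨p, hp⟩ := h.exists_walk_length_eq_dist
  exact hp ▸ p.le_add_length_of_adj f hf

section Corona

variable {V : Type*} {W : V → Type*} {G : SimpleGraph V} {H : ∀ v, SimpleGraph (W v)}

@[simp]
lemma corona_adj_inl_inl {a b : V} : (corona G H).Adj (inl a) (inl b) ↔ G.Adj a b := by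
  simpa [corona, coronaRel, G.adj_comm b a] using G.ne_of_adj

@[simp]
lemma corona_adj_inl_inr {a : V} {s : Σ v, W v} :
    (corona G H).Adj (inl a) (inr s) ↔ a = s.1 := by
  simp [corona, coronaRel]

lemma corona_adj_inl_inr_self (b : V) (w : W b) : (corona G H).Adj (inl b) (inr ⟨b, w⟩) :=
  corona_adj_inl_inr.mpr rfl

@[simp]
lemma corona_adj_inr_inl {a : V} {s : Σ v, W v} :
    (corona G H).Adj (inr s) (inl a) ↔ s.1 = a := by
  simp [corona, coronaRel, eq_comm]

lemma corona_adj_inr_inr {s t : Σ v, W v} (h : (corona G H).Adj (inr s) (inr t)) : s.1 = t.1 := by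
  simp only [corona, fromRel_adj, coronaRel] at h
  obtain ⟨-, ⟨h, -⟩ | ⟨h, -⟩⟩ := h
  exacts [h, h.symm]

@[simp]
lemma corona_adj_inr_inr_same {a : V} {x y : W a} :
    (corona G H).Adj (inr ⟨a, x⟩) (inr ⟨a, y⟩) ↔ (H a).Adj x y := by
  simpa [corona, coronaRel, (H a).adj_comm y x] using (H a).ne_of_adj

variable (G) in
open Classical in
/-- The distance in `corona G H` from a vertex to the copy of `H b`. -/
noncomputable def coronaDistToCopy (b : V) : V ⊕ (Σ v, W v) → ℕ
  | inl a => G.dist a b + 1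
  | inr s => if s.1 = b then 0 else G.dist s.1 b + 2

lemma coronaDistToCopy_le_of_adj (b : V) {x y : V ⊕ (Σ v, W v)} (h : (corona G H).Adj x y) :
    coronaDistToCopy G b x ≤ coronaDistToCopy G b y + 1 := by
  rcases x with a | s <;> rcases y with c | t
  · have := (corona_adj_inl_inl.mp h).symm.diff_dist_adj (u := b)
    simp only [coronaDistToCopy, G.dist_comm (v := b)]
    omega
  · obtain rfl := corona_adj_inl_inr.mp h
    by_cases hb : t.1 = b <;> simp [coronaDistToCopy, hb]
  · obtain rfl := corona_adj_inr_inl.mp h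
    by_cases hb : s.1 = b <;> simp [coronaDistToCopy, hb]
  · have := corona_adj_inr_inr h
    simp only [coronaDistToCopy]
    split_ifs <;> grind

variable (G H) in
def coronaInl : G →g corona G H := ⟨inl, corona_adj_inl_inl.mpr⟩

lemma corona_connected (hG : G.Connected) : (corona G H).Connected := by
  have : Nonempty (V ⊕ (Σ v, W v)) := ⟨inl hG.nonempty.some⟩
  have to_inl : ∀ x, (corona G H).Reachable x (inl (Sum.elim id Sigma.fst x))
    | inl _ => .rfl
    | inr ⟨b, w⟩ => (corona_adj_inl_inr_self b w).symm.reachable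
  exact .mk fun x y => (to_inl x).trans <|
    ((hG.preconnected _ _).map (coronaInl G H)).trans (to_inl y).symm

lemma coronaDistToCopy_le_dist (hG : G.Connected) (x : V ⊕ (Σ v, W v)) {b : V} (w : W b) :
    coronaDistToCopy G b x ≤ (corona G H).dist x (inr ⟨b, w⟩) := by
  have := ((corona_connected hG).preconnected x (inr ⟨b, w⟩)).le_add_dist_of_adj _
    fun _ _ => coronaDistToCopy_le_of_adj (H := H) b
  simpa [coronaDistToCopy] using this

lemma corona_dist_inl_inl_le (hG : G.Connected) (a b : V) :
    (corona G H).dist (inl a) (inl b) ≤ G.dist a b := by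
  obtain ⟨p, hp⟩ := hG.exists_walk_length_eq_dist a b
  exact (dist_le (p.map (coronaInl G H))).trans_eq (by rw [Walk.length_map, hp])

lemma corona_dist_inl_inr (hG : G.Connected) (a b : V) (w : W b) :
    (corona G H).dist (inl a) (inr ⟨b, w⟩) = G.dist a b + 1 := by
  refine le_antisymm ?_ (coronaDistToCopy_le_dist hG (inl a) w)
  calc (corona G H).dist (inl a) (inr ⟨b, w⟩)
      ≤ (corona G H).dist (inl a) (inl b) + (corona G H).dist (inl b) (inr ⟨b, w⟩) :=
        (corona_connected hG).dist_triangle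
    _ ≤ G.dist a b + 1 := by
        rw [dist_eq_one_iff_adj.mpr (corona_adj_inl_inr_self b w)]
        exact Nat.add_le_add_right (corona_dist_inl_inl_le hG a b) 1

lemma corona_dist_inr_inr_of_ne (hG : G.Connected) {a b : V} (hab : a ≠ b) (x : W a) (w : W b) :
    (corona G H).dist (inr ⟨a, x⟩) (inr ⟨b, w⟩) = G.dist a b + 2 := by
  refine le_antisymm ?_ (by
    simpa [coronaDistToCopy, hab] using coronaDistToCopy_le_dist hG (inr ⟨a, x⟩) w)
  calc (corona G H).dist (inr ⟨a, x⟩) (inr ⟨b, w⟩)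
      ≤ (corona G H).dist (inr ⟨a, x⟩) (inl a) + (corona G H).dist (inl a) (inr ⟨b, w⟩) :=
        (corona_connected hG).dist_triangle
    _ = G.dist a b + 2 := by
        rw [dist_eq_one_iff_adj.mpr (corona_adj_inl_inr_self a x).symm, corona_dist_inl_inr hG]
        omega

lemma corona_dist_inr_inr_le_two {a : V} (x y : W a) :
    (corona G H).dist (inr ⟨a, x⟩) (inr ⟨a, y⟩) ≤ 2 :=
  dist_le <| .cons (corona_adj_inl_inr_self a x).symm (.cons (corona_adj_inl_inr_self a y) .nil)

lemma corona_dist_inr_inr {a : V} (hH : (H a).Connected) (x y : W a) :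
    (corona G H).dist (inr ⟨a, x⟩) (inr ⟨a, y⟩) = min ((H a).dist x y) 2 := by
  rcases eq_or_ne x y with rfl | hne
  · simp
  by_cases hadj : (H a).Adj x y
  · rw [dist_eq_one_iff_adj.mpr hadj, dist_eq_one_iff_adj.mpr (corona_adj_inr_inr_same.mpr hadj)]
    rfl
  have hH_two := hH.one_lt_dist_of_ne_of_not_adj hne hadj
  have hreach : (corona G H).Reachable (inr ⟨a, x⟩) (inr ⟨a, y⟩) :=
    (corona_adj_inl_inr_self a x).symm.reachable.trans (corona_adj_inl_inr_self a y).reachable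
  have hcorona_two := hreach.one_lt_dist_of_ne_of_not_adj (by simpa) (by simpa)
  have := corona_dist_inr_inr_le_two (G := G) (H := H) x y
  omega

lemma corona_eq_inr_of_dist_ne (hG : G.Connected) {a : V} {x y : W a} {t : V ⊕ (Σ v, W v)}
    (h : (corona G H).dist (inr ⟨a, x⟩) t ≠ (corona G H).dist (inr ⟨a, y⟩) t) :
    ∃ w, t = inr ⟨a, w⟩ := by
  rcases t with b | ⟨b, w⟩
  · simp only [dist_comm (u := inr _), corona_dist_inl_inr hG] at h
    exact absurd rfl h
  · rcases eq_or_ne a b with rfl | hab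
    · exact ⟨w, rfl⟩
    · simp only [corona_dist_inr_inr_of_ne hG hab] at h
      exact absurd rfl h

end Corona

/-- `kMetricGen G k S` says, by unfolding, that `kResolves G k S u v` for all `u ≠ v`. -/
def kResolves {V : Type*} (G : SimpleGraph V) (k : ℕ) (S : Set V) (u v : V) : Prop :=
  ∃ T : Finset V, ↑T ⊆ S ∧ k ≤ T.card ∧ ∀ w ∈ T, G.dist u w ≠ G.dist v w

section KMetric

variable {V : Type*} {G : SimpleGraph V} {k : ℕ}

lemma kResolves.symm {S : Set V} {u v : V} (h : kResolves G k S u v) : kResolves G k S v u :=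
  let ⟨T, hTS, hkT, hT⟩ := h
  ⟨T, hTS, hkT, fun w hw => (hT w hw).symm⟩

lemma kMetricGen.of_le [Fintype V] {k' : ℕ} {S : Set V} (h : kMetricGen G k' S) (hk : k ≤ k') :
    kMetricGen G k S := fun u v huv =>
  let ⟨T, hTS, hkT, hT⟩ := h u v huv
  ⟨T, hTS, hk.trans hkT, hT⟩

lemma kMetricDim_le_card [Fintype V] {S : Finset V} (h : kMetricGen G k S) :
    kMetricDim G k ≤ S.card :=
  Nat.sInf_le ⟨S, h, rfl⟩

lemma le_kMetricDim [Fintype V] {m : ℕ} (hne : ∃ S : Finset V, kMetricGen G k S)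
    (h : ∀ S : Finset V, kMetricGen G k S → m ≤ S.card) : m ≤ kMetricDim G k := by
  obtain ⟨S, hS⟩ := hne
  exact le_csInf ⟨S.card, S, hS, rfl⟩ fun _ ⟨T, hT, hcard⟩ => hcard ▸ h T hT

end KMetric

section CoronaKMetric

variable {V : Type*} {W : V → Type*} [∀ v, Fintype (W v)] {G : SimpleGraph V}
  {H : ∀ v, SimpleGraph (W v)} {k : ℕ}

lemma corona_kResolves_of_copy {u v : V ⊕ (Σ v, W v)} {c : V} (hk : k ≤ Fintype.card (W c))
    (h : ∀ w, (corona G H).dist u (inr ⟨c, w⟩) ≠ (corona G H).dist v (inr ⟨c, w⟩)) :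
    kResolves (corona G H) k (Set.range inr) u v := by
  classical
  refine ⟨Finset.univ.image fun w => inr ⟨c, w⟩, ?_, ?_, ?_⟩
  · simp [Set.range_subset_iff]
  · rwa [Finset.card_image_of_injective _ fun _ _ h => by simpa using h, Finset.card_univ]
  · simpa using h

lemma corona_kResolves_inl (hG : G.Connected) [Nontrivial V] (hk : ∀ c, k ≤ Fintype.card (W c))
    {a : V} {u : V ⊕ (Σ v, W v)} (hu : inl a ≠ u) :
    kResolves (corona G H) k (Set.range inr) (inl a) u := by
  rcases u with b | ⟨b, y⟩
  · have hab := hG.pos_dist_of_ne (u := b) (v := a) (by simpa [eq_comm] using hu)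
    refine corona_kResolves_of_copy (hk a) fun w => ?_
    simp only [corona_dist_inl_inr hG, dist_self]
    omega
  rcases eq_or_ne a b with rfl | hab
  · obtain ⟨c, hca⟩ := exists_ne a
    refine corona_kResolves_of_copy (hk c) fun w => ?_
    simp only [corona_dist_inl_inr hG, corona_dist_inr_inr_of_ne hG hca.symm]
    omega
  · have hba := hG.pos_dist_of_ne hab.symm
    refine corona_kResolves_of_copy (hk a) fun w => ?_
    simp only [corona_dist_inl_inr hG, corona_dist_inr_inr_of_ne hG hab.symm, dist_self]
    omega

lemma corona_kResolves_inr_inr_of_ne (hG : G.Connected) (hk : ∀ c, k ≤ Fintype.card (W c))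
    {s t : Σ v, W v} (hst : s.1 ≠ t.1) :
    kResolves (corona G H) k (Set.range inr) (inr s) (inr t) := by
  obtain ⟨a, x⟩ := s
  obtain ⟨b, y⟩ := t
  have hba := hG.pos_dist_of_ne hst.symm
  refine corona_kResolves_of_copy (hk a) fun w => ?_
  have := corona_dist_inr_inr_le_two (G := G) (H := H) x w
  rw [corona_dist_inr_inr_of_ne hG hst.symm]
  omega

variable [Fintype V] {S : Set (V ⊕ (Σ v, W v))}

lemma kMetricGen.kResolves_inr_inr (hG : G.Connected) (hS : kMetricGen (corona G H) k S)
    {a : V} {x y : W a} (hxy : x ≠ y) :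
    kResolves (corona G H) k (Set.range inr) (inr ⟨a, x⟩) (inr ⟨a, y⟩) := by
  obtain ⟨T, -, hkT, hT⟩ := hS (inr ⟨a, x⟩) (inr ⟨a, y⟩) (by simpa using hxy)
  refine ⟨T, fun t ht => ?_, hkT, hT⟩
  obtain ⟨w, rfl⟩ := corona_eq_inr_of_dist_ne hG (hT t ht)
  exact ⟨_, rfl⟩

lemma kMetricGen.le_card_copy (hG : G.Connected) (hS : kMetricGen (corona G H) k S) (c : V)
    [Nontrivial (W c)] : k ≤ Fintype.card (W c) := by
  classical
  obtain ⟨x, y, hxy⟩ := exists_pair_ne (W c)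
  obtain ⟨T, -, hkT, hT⟩ := hS (inr ⟨c, x⟩) (inr ⟨c, y⟩) (by simpa using hxy)
  have hT_copy : T ⊆ Finset.univ.image fun w => inr ⟨c, w⟩ := fun t ht => by
    obtain ⟨w, rfl⟩ := corona_eq_inr_of_dist_ne hG (hT t ht)
    simp
  calc k ≤ T.card := hkT
    _ ≤ _ := Finset.card_le_card hT_copy
    _ ≤ Fintype.card (W c) := Finset.card_image_le

lemma kMetricGen.range_inr (hG : G.Connected) [Nontrivial V] [∀ v, Nontrivial (W v)]
    (hS : kMetricGen (corona G H) k S) : kMetricGen (corona G H) k (Set.range inr) := by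
  have hk c := hS.le_card_copy hG c
  rintro (a | ⟨a, x⟩) u hu
  · exact corona_kResolves_inl hG hk hu
  rcases u with b | ⟨b, y⟩
  · exact (corona_kResolves_inl hG hk hu.symm).symm
  rcases eq_or_ne a b with rfl | hab
  · exact hS.kResolves_inr_inr hG (by simpa using hu)
  · exact corona_kResolves_inr_inr_of_ne hG hk hab

lemma kMetricGen.restrict_copy (hG : G.Connected) {a : V} (hH : (H a).Connected)
    (hS : kMetricGen (corona G H) k S) : kMetricGen (H a) k {w | inr ⟨a, w⟩ ∈ S} := by
  classical
  intro x y hxy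
  obtain ⟨T, hTS, hkT, hT⟩ := hS (inr ⟨a, x⟩) (inr ⟨a, y⟩) (by simpa using hxy)
  set T' := Finset.univ.filter fun w => inr ⟨a, w⟩ ∈ T
  refine ⟨T', fun w hw => hTS (by simpa [T'] using hw), ?_, ?_⟩
  · have hT_copy : T ⊆ T'.image fun w => inr ⟨a, w⟩ := fun t ht => by
      obtain ⟨w, rfl⟩ := corona_eq_inr_of_dist_ne hG (hT t ht)
      simpa [T'] using ht
    exact hkT.trans ((Finset.card_le_card hT_copy).trans Finset.card_image_le)
  · intro w hw hdist
    apply hT _ (by simpa [T'] using hw)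
    rw [corona_dist_inr_inr hH, corona_dist_inr_inr hH, hdist]

lemma sum_kMetricDim_le_card (hG : G.Connected) (hH : ∀ v, (H v).Connected)
    {S : Finset (V ⊕ (Σ v, W v))} (hS : kMetricGen (corona G H) k S) :
    ∑ v, kMetricDim (H v) k ≤ S.card := by
  classical
  calc ∑ v, kMetricDim (H v) k
      ≤ ∑ v, (Finset.univ.filter fun w => inr ⟨v, w⟩ ∈ S).card :=
        Finset.sum_le_sum fun v _ => kMetricDim_le_card (by simpa using hS.restrict_copy hG (hH v))
    _ = (Finset.univ.sigma fun v => Finset.univ.filter fun w => inr ⟨v, w⟩ ∈ S).card :=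
        (Finset.card_sigma _ _).symm
    _ ≤ S.card := Finset.card_le_card_of_injOn inr (fun s hs => by simpa using hs)
        inr_injective.injOn

end CoronaKMetric

theorem stmt_15_general {V : Type*} [Fintype V] (hn : 2 ≤ Fintype.card V) {W : V → Type*}
    [∀ v, Fintype (W v)] [∀ v, Nontrivial (W v)] (G : SimpleGraph V) (hG : G.Connected)
    (H : ∀ v, SimpleGraph (W v)) (hH : ∀ v, (H v).Connected) (k' k : ℕ)
    (hdim : kMetricDimensional (corona G H) k') (hk : k ≤ k') :
    (∑ v, kMetricDim (H v) k) ≤ kMetricDim (corona G H) k ∧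
      kMetricDim (corona G H) k ≤ ∑ v, Fintype.card (W v) := by
  have : Nontrivial V := Fintype.one_lt_card_iff_nontrivial.mp hn
  obtain ⟨S, hS⟩ := hdim.1
  let copies : Finset (V ⊕ (Σ v, W v)) := Finset.univ.map .inr
  have hcopies : kMetricGen (corona G H) k copies := by
    simpa [copies] using (hS.of_le hk).range_inr hG
  refine ⟨le_kMetricDim ⟨copies, hcopies⟩ fun T hT => sum_kMetricDim_le_card hG hH hT, ?_⟩
  calc kMetricDim (corona G H) k ≤ copies.card := kMetricDim_le_card hcopies
    _ = ∑ v, Fintype.card (W v) := by simp [copies, Fintype.card_sigma]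

/-- bounds for the `k`-metric dimension of a corona product:
`Σ dim_k(H_i) ≤ dim_k(G ⊙ 𝓗) ≤ Σ |V(H_i)|` for every `k ∈ {1, …, k'}`. -/
theorem stmt_15 {V : Type*} [Fintype V] (hn : 2 ≤ Fintype.card V) {W : V → Type*}
    [∀ v, Fintype (W v)] [∀ v, Nontrivial (W v)] (G : SimpleGraph V) (hG : G.Connected)
    (H : ∀ v, SimpleGraph (W v)) (hH : ∀ v, (H v).Connected) (k' k : ℕ)
    (hdim : kMetricDimensional (corona G H) k') (hk1 : 1 ≤ k) (hk : k ≤ k') :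
    (∑ v, kMetricDim (H v) k) ≤ kMetricDim (corona G H) k ∧
      kMetricDim (corona G H) k ≤ ∑ v, Fintype.card (W v) :=
  stmt_15_general hn G hG H hH k' k hdim hk
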